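/- For n ≥ 3, the odd unitary Steinberg group StU(2n,R,𝔏) is a perfect group. -/

import Mathlib

open MulOpposite
open scoped commutatorElement

universe u

/-- A pseudo-involution on a ring `R`: an additive map `a ↦ ā` such that `1̄` is
invertible (with explicit inverse `e = 1̄⁻¹`), `ā̄ = a` and `(ab)‾ = b̄·1̄⁻¹·ā`. -/
structure PseudoInvolution (R : Type*) [Ring R] where
  bar : R → R
  bar_add : ∀ a b : R, bar (a + b) = bar a + bar b
  e : R
  e_bar_one : e * bar 1 = 1
  bar_one_e : bar 1 * e = 1
  bar_bar : ∀ a : R, bar (bar a) = a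
  bar_mul : ∀ a b : R, bar (a * b) = bar b * e * bar a

/-- An anti-Hermitian form on a right `R`-module `V` (a right module is encoded as a
module over the opposite ring, so `u·a` is `op a • u`). -/
structure AntiHermitianForm (R : Type*) [Ring R] (pi : PseudoInvolution R)
    (V : Type*) [AddCommGroup V] [Module Rᵐᵒᵖ V] where
  B : V → V → R
  add_left : ∀ u v w : V, B (u + v) w = B u w + B v w
  add_right : ∀ u v w : V, B u (v + w) = B u v + B u w
  smul_pair : ∀ (a b : R) (u v : V), B (op a • u) (op b • v) = pi.bar a * pi.e * B u v * b
  skew : ∀ u v : V, B u v = - pi.bar (B v u)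

variable {R : Type u} [Ring R] {pi : PseudoInvolution R}
variable {V : Type u} [AddCommGroup V] [Module Rᵐᵒᵖ V]

/-- The Heisenberg group operation `(u,a) ∔ (v,b) = (u+v, a+b+B(u,v))`. -/
def hAdd (f : AntiHermitianForm R pi V) (x y : V × R) : V × R :=
  (x.1 + y.1, x.2 + y.2 + f.B x.1 y.1)

/-- The Heisenberg group inverse `∸(u,a) = (−u, −a+B(u,u))`. -/
def hInv (f : AntiHermitianForm R pi V) (x : V × R) : V × R :=
  (-x.1, -x.2 + f.B x.1 x.1)

/-- The right action of `R` on the Heisenberg group, `(u,a) ↼ b = (ub, b̄·1̄⁻¹·a·b)`. -/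
def hAct (pi : PseudoInvolution R) (x : V × R) (b : R) : V × R :=
  (op b • x.1, pi.bar b * pi.e * x.2 * b)

/-- An odd form parameter: a subgroup of the Heisenberg group, stable under the
`R`-action, lying between `𝔏_min` and `𝔏_max`. -/
structure OddFormParameter (f : AntiHermitianForm R pi V) where
  carrier : Set (V × R)
  add_mem : ∀ x y : V × R, x ∈ carrier → y ∈ carrier → hAdd f x y ∈ carrier
  inv_mem : ∀ x : V × R, x ∈ carrier → hInv f x ∈ carrier
  act_mem : ∀ x : V × R, x ∈ carrier → ∀ b : R, hAct pi x b ∈ carrier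
  min_le : ∀ a : R, ((0 : V), a + pi.bar a) ∈ carrier
  le_max : ∀ x : V × R, x ∈ carrier → x.2 = pi.bar x.2 + f.B x.1 x.1

/-- The index set `Ω = {1,…,n,−n,…,−1}` (for `n = ∞` all nonzero integers). -/
def Omega (n : ℕ∞) : Set ℤ := {i : ℤ | i ≠ 0 ∧ (i.natAbs : ℕ∞) ≤ n}

/-- `ε_i = 1̄⁻¹` for `i > 0` and `ε_i = −1` for `i < 0`. -/
def epsI (pi : PseudoInvolution R) (i : ℤ) : R := if 0 < i then pi.e else -1

/-- A family of "Steinberg generators" in a group `G` satisfying Petrov's relations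
R0–R9 of the odd unitary Steinberg group `StU(2n, R, 𝔏)`. -/
structure StURels (n : ℕ∞) (f : AntiHermitianForm R pi V) (L : OddFormParameter f)
    (G : Type*) [Group G] where
  X : ℤ → ℤ → R → G
  Y : ℤ → V × R → G
  rel0 : ∀ i j : ℤ, i ∈ Omega n → j ∈ Omega n → j ≠ i → j ≠ -i → ∀ a : R,
    X i j a = X (-j) (-i) (epsI pi (-j) * pi.bar a * epsI pi i)
  rel1 : ∀ i j : ℤ, i ∈ Omega n → j ∈ Omega n → j ≠ i → j ≠ -i → ∀ a b : R,
    X i j a * X i j b = X i j (a + b)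
  rel2 : ∀ i : ℤ, i ∈ Omega n → ∀ ξ ζ : V × R, ξ ∈ L.carrier → ζ ∈ L.carrier →
    Y i ξ * Y i ζ = Y i (hAdd f ξ ζ)
  rel3 : ∀ i j h k : ℤ, i ∈ Omega n → j ∈ Omega n → h ∈ Omega n → k ∈ Omega n →
    j ≠ i → j ≠ -i → k ≠ h → k ≠ -h → h ≠ j → h ≠ -i → k ≠ i → k ≠ -j →
    ∀ a b : R, ⁅X i j a, X h k b⁆ = 1
  rel4 : ∀ i j k : ℤ, i ∈ Omega n → j ∈ Omega n → k ∈ Omega n → k ≠ j → k ≠ -j →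
    j ≠ -i → k ≠ i → ∀ ξ : V × R, ξ ∈ L.carrier → ∀ a : R, ⁅Y i ξ, X j k a⁆ = 1
  rel5 : ∀ i j k : ℤ, i ∈ Omega n → j ∈ Omega n → k ∈ Omega n →
    j ≠ i → j ≠ -i → k ≠ j → k ≠ -j → k ≠ i → k ≠ -i →
    ∀ a b : R, ⁅X i j a, X j k b⁆ = X i k (a * b)
  rel6 : ∀ i j : ℤ, i ∈ Omega n → j ∈ Omega n → j ≠ i → j ≠ -i →
    ∀ (u : V) (a : R) (v : V) (b : R), (u, a) ∈ L.carrier → (v, b) ∈ L.carrier →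
    ⁅Y i (u, a), Y j (v, b)⁆ = X i (-j) (epsI pi i * f.B u v)
  rel7 : ∀ i : ℤ, i ∈ Omega n →
    ∀ (u : V) (a : R) (v : V) (b : R), (u, a) ∈ L.carrier → (v, b) ∈ L.carrier →
    ⁅Y i (u, a), Y i (v, b)⁆ = Y i (0, f.B u v - f.B v u)
  rel8 : ∀ i j : ℤ, i ∈ Omega n → j ∈ Omega n → j ≠ i → j ≠ -i →
    ∀ (u : V) (a : R), (u, a) ∈ L.carrier → ∀ b : R,
    ⁅Y i (u, a), X (-i) j b⁆ = X i j (epsI pi i * a * b) * Y (-j) (hAct pi (u, -pi.bar a) b)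
  rel9 : ∀ i j : ℤ, i ∈ Omega n → j ∈ Omega n → j ≠ i → j ≠ -i → ∀ a b : R,
    ⁅X i j a, X j (-i) b⁆ =
      Y i (0, -(epsI pi (-i)) * pi.bar 1 * a * b + pi.bar b * pi.e * pi.bar a * epsI pi i)

/-- `(G, S)` *is* the odd unitary Steinberg group `StU(2n, R, 𝔏)`: it has the universal
property of the presentation, i.e. for every group `H` with Steinberg generators
satisfying R0–R9 there is a unique homomorphism `G →* H` matching the generators. -/
def IsStU {n : ℕ∞} {f : AntiHermitianForm R pi V} {L : OddFormParameter f}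
    {G : Type u} [Group G] (S : StURels n f L G) : Prop :=
  ∀ (H : Type u) [Group H], ∀ T : StURels n f L H,
    ∃! φ : G →* H,
      (∀ i j : ℤ, i ∈ Omega n → j ∈ Omega n → j ≠ i → j ≠ -i → ∀ a : R,
        φ (S.X i j a) = T.X i j a) ∧
      (∀ i : ℤ, i ∈ Omega n → ∀ ξ : V × R, ξ ∈ L.carrier → φ (S.Y i ξ) = T.Y i ξ)

/-!
By R5, `X_ij(a) = [X_ih(a), X_hj(1)]` for a third index `h ≠ ±i, ±j`, which exists because
`n ≥ 3`. By R8 with `b = 1`, `[X_i(v, -c̄), X_{-i,-k}(1)] = X_{i,-k}(·) · X_k(v, c)`, where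
`(v, -c̄) = (∸(v, c)) ↼ (-1)` lies in `𝔏` because `c = c̄ + B(v, v)` (as `𝔏 ≤ 𝔏_max`).
So every generator lies in the commutator subgroup. By the universal property, a normal subgroup
containing all generators is everything: the quotient map agrees with the trivial map on them.
-/

theorem PseudoInvolution.bar_neg (pi : PseudoInvolution R) (a : R) :
    pi.bar (-a) = -pi.bar a :=
  (AddMonoidHom.mk' pi.bar pi.bar_add).map_neg a

theorem hAct_one (x : V × R) : hAct pi x 1 = x := by
  simp [hAct, pi.bar_one_e]

theorem OddFormParameter.mk_neg_bar_mem {f : AntiHermitianForm R pi V} (L : OddFormParameter f)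
    {v : V} {c : R} (hvc : (v, c) ∈ L.carrier) : (v, -pi.bar c) ∈ L.carrier := by
  have hc : c = pi.bar c + f.B v v := L.le_max _ hvc
  convert L.act_mem _ (L.inv_mem _ hvc) (-1) using 1
  simp only [hAct, hInv, op_neg, op_one, neg_smul, one_smul, neg_neg, pi.bar_neg, neg_mul,
    pi.bar_one_e, one_mul, mul_neg, mul_one, Prod.mk.injEq, true_and]
  conv_rhs => rw [hc]
  abel

theorem neg_mem_Omega {n : ℕ∞} {i : ℤ} (hi : i ∈ Omega n) : -i ∈ Omega n :=
  ⟨neg_ne_zero.mpr hi.1, by rw [Int.natAbs_neg]; exact hi.2⟩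

theorem exists_mem_Omega_ne {n : ℕ∞} (hn : 3 ≤ n) (i j : ℤ) :
    ∃ h ∈ Omega n, h ≠ i ∧ h ≠ -i ∧ h ≠ j ∧ h ≠ -j := by
  have small : ∀ m : ℕ, m ≤ 3 → ((m : ℤ).natAbs : ℕ∞) ≤ n := fun m hm =>
    le_trans (by simpa using hm) hn
  by_cases h1 : i.natAbs ≠ 1 ∧ j.natAbs ≠ 1
  · exact ⟨1, ⟨one_ne_zero, small 1 (by norm_num)⟩, by omega⟩
  by_cases h2 : i.natAbs ≠ 2 ∧ j.natAbs ≠ 2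
  · exact ⟨2, ⟨two_ne_zero, small 2 (by norm_num)⟩, by omega⟩
  · exact ⟨3, ⟨three_ne_zero, small 3 le_rfl⟩, by omega⟩

section Steinberg

variable {n : ℕ∞} {f : AntiHermitianForm R pi V} {L : OddFormParameter f}

namespace StURels

def map {G H : Type*} [Group G] [Group H] (S : StURels n f L G) (φ : G →* H) :
    StURels n f L H where
  X i j a := φ (S.X i j a)
  Y i ξ := φ (S.Y i ξ)
  rel0 i j hi hj h1 h2 a := congrArg φ (S.rel0 i j hi hj h1 h2 a)
  rel1 i j hi hj h1 h2 a b := by rw [← map_mul, S.rel1 i j hi hj h1 h2 a b]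
  rel2 i hi ξ ζ hξ hζ := by rw [← map_mul, S.rel2 i hi ξ ζ hξ hζ]
  rel3 i j h k hi hj hh hk a1 a2 a3 a4 a5 a6 a7 a8 a b := by
    rw [← map_commutatorElement, S.rel3 i j h k hi hj hh hk a1 a2 a3 a4 a5 a6 a7 a8 a b,
      map_one]
  rel4 i j k hi hj hk a1 a2 a3 a4 ξ hξ a := by
    rw [← map_commutatorElement, S.rel4 i j k hi hj hk a1 a2 a3 a4 ξ hξ a, map_one]
  rel5 i j k hi hj hk a1 a2 a3 a4 a5 a6 a b := by
    rw [← map_commutatorElement, S.rel5 i j k hi hj hk a1 a2 a3 a4 a5 a6 a b]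
  rel6 i j hi hj h1 h2 u a v b hu hv := by
    rw [← map_commutatorElement, S.rel6 i j hi hj h1 h2 u a v b hu hv]
  rel7 i hi u a v b hu hv := by
    rw [← map_commutatorElement, S.rel7 i hi u a v b hu hv]
  rel8 i j hi hj h1 h2 u a hu b := by
    rw [← map_commutatorElement, S.rel8 i j hi hj h1 h2 u a hu b, map_mul]
  rel9 i j hi hj h1 h2 a b := by
    rw [← map_commutatorElement, S.rel9 i j hi hj h1 h2 a b]

variable {G : Type u} [Group G] (S : StURels n f L G)

theorem X_mem_commutator (hn : 3 ≤ n) {i j : ℤ} (hi : i ∈ Omega n) (hj : j ∈ Omega n)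
    (hji : j ≠ i) (hjni : j ≠ -i) (a : R) : S.X i j a ∈ commutator G := by
  obtain ⟨h, hh, hhi, hhni, hhj, hhnj⟩ := exists_mem_Omega_ne hn i j
  have hX : ⁅S.X i h a, S.X h j 1⁆ = S.X i j a := by
    rw [S.rel5 i h j hi hh hj hhi hhni hhj.symm (by omega) hji hjni a 1, mul_one]
  exact hX ▸ Subgroup.commutator_mem_commutator (Subgroup.mem_top _) (Subgroup.mem_top _)

theorem Y_mem_commutator (hn : 3 ≤ n) {k : ℤ} (hk : k ∈ Omega n) {ξ : V × R}
    (hξ : ξ ∈ L.carrier) : S.Y k ξ ∈ commutator G := by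
  obtain ⟨v, c⟩ := ξ
  obtain ⟨i, hi, hik, hink, -, -⟩ := exists_mem_Omega_ne hn k k
  have hnk := neg_mem_Omega hk
  have hR8 := S.rel8 i (-k) hi hnk (by omega) (by omega) v (-pi.bar c) (L.mk_neg_bar_mem hξ) 1
  rw [neg_neg, pi.bar_neg, pi.bar_bar, neg_neg, hAct_one] at hR8
  have hY : S.Y k (v, c) = (S.X i (-k) (epsI pi i * -pi.bar c * 1))⁻¹ *
      ⁅S.Y i (v, -pi.bar c), S.X (-i) (-k) 1⁆ := by
    rw [hR8, inv_mul_cancel_left]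
  rw [hY]
  exact mul_mem (inv_mem (S.X_mem_commutator hn hi hnk (by omega) (by omega) _))
    (Subgroup.commutator_mem_commutator (Subgroup.mem_top _) (Subgroup.mem_top _))

end StURels

variable {G : Type u} [Group G] {S : StURels n f L G}

theorem IsStU.hom_ext (hS : IsStU S) {H : Type u} [Group H] {φ ψ : G →* H}
    (hX : ∀ i j : ℤ, i ∈ Omega n → j ∈ Omega n → j ≠ i → j ≠ -i → ∀ a : R,
      φ (S.X i j a) = ψ (S.X i j a))
    (hY : ∀ i : ℤ, i ∈ Omega n → ∀ ξ : V × R, ξ ∈ L.carrier → φ (S.Y i ξ) = ψ (S.Y i ξ)) :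
    φ = ψ := by
  obtain ⟨χ, -, hχ⟩ := hS H (S.map ψ)
  exact (hχ φ ⟨hX, hY⟩).trans (hχ ψ ⟨fun _ _ _ _ _ _ _ => rfl, fun _ _ _ _ => rfl⟩).symm

theorem IsStU.eq_top_of_generators_mem (hS : IsStU S) (N : Subgroup G) [N.Normal]
    (hX : ∀ i j : ℤ, i ∈ Omega n → j ∈ Omega n → j ≠ i → j ≠ -i → ∀ a : R, S.X i j a ∈ N)
    (hY : ∀ i : ℤ, i ∈ Omega n → ∀ ξ : V × R, ξ ∈ L.carrier → S.Y i ξ ∈ N) :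
    N = ⊤ := by
  have hmk : QuotientGroup.mk' N = 1 := IsStU.hom_ext hS
    (fun i j hi hj hji hjni a => (QuotientGroup.eq_one_iff _).mpr (hX i j hi hj hji hjni a))
    (fun i hi ξ hξ => (QuotientGroup.eq_one_iff _).mpr (hY i hi ξ hξ))
  rw [← QuotientGroup.ker_mk' N, hmk, MonoidHom.ker_one]

end Steinberg

/-- For `n ≥ 3` (including `n = ∞`) the odd unitary Steinberg group
`StU(2n, R, 𝔏)` is perfect. -/
theorem stU_perfect (f : AntiHermitianForm R pi V) (L : OddFormParameter f)
    (n : ℕ∞) (hn : 3 ≤ n)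
    {G : Type u} [Group G] (S : StURels n f L G) (hS : IsStU S) :
    commutator G = ⊤ := by
  exact IsStU.eq_top_of_generators_mem hS (commutator G)
    (fun _ _ hi hj hji hjni a => S.X_mem_commutator hn hi hj hji hjni a)
    (fun _ hk _ hξ => S.Y_mem_commutator hn hk hξ)
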